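/- arXiv:2306.13245 — 3 statements merged into one kernel-verified Lean document; each statement's English description precedes it below -/
import Mathlib

section
/- Let f = (f11, f12, f22) ∈ C²_c(S²; D1). Then for every x ∈ ℝ², (f11 + f22)(x) = (1/(2 u2)) · D_u D_v F (x), where F(y) = ∫₀^∞ (Lf + Tf)(y + t e2) dt. (Recovery of the trace of a symmetric 2-tensor field from its longitudinal and transverse V-line transforms.) -/
noncomputable section

open MeasureTheory

/-- The divergent beam transform `X_w h (x) = ∫₀^∞ h(x + t w) dt`. -/
def Xbeam (w : ℝ × ℝ) (h : ℝ × ℝ → ℝ) (x : ℝ × ℝ) : ℝ :=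
  ∫ t in Set.Ioi (0 : ℝ), h (x + t • w)

/-- The k-th moment divergent beam transform `X_w^k h (x) = ∫₀^∞ t^k h(x + t w) dt`. -/
def Xmom (k : ℕ) (w : ℝ × ℝ) (h : ℝ × ℝ → ℝ) (x : ℝ × ℝ) : ℝ :=
  ∫ t in Set.Ioi (0 : ℝ), t ^ k * h (x + t • w)

/-- The directional derivative `D_w h = w ⋅ ∇h`. -/
def Dir (w : ℝ × ℝ) (h : ℝ × ℝ → ℝ) (x : ℝ × ℝ) : ℝ :=
  fderiv ℝ h x w

/-- Support contained in the open unit disc `D1`. -/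
def SuppInDisc (h : ℝ × ℝ → ℝ) : Prop :=
  ∀ x : ℝ × ℝ, 1 ≤ x.1 ^ 2 + x.2 ^ 2 → h x = 0

/-- The longitudinal V-line transform. -/
def VlineL (u1 u2 : ℝ) (f11 f12 f22 : ℝ × ℝ → ℝ) : ℝ × ℝ → ℝ :=
  Xbeam (u1, u2) (fun y => u1 ^ 2 * f11 y + 2 * u1 * u2 * f12 y + u2 ^ 2 * f22 y)
    + Xbeam (-u1, u2) (fun y => u1 ^ 2 * f11 y - 2 * u1 * u2 * f12 y + u2 ^ 2 * f22 y)

/-- The transverse V-line transform. -/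
def VlineT (u1 u2 : ℝ) (f11 f12 f22 : ℝ × ℝ → ℝ) : ℝ × ℝ → ℝ :=
  Xbeam (u1, u2) (fun y => u2 ^ 2 * f11 y - 2 * u1 * u2 * f12 y + u1 ^ 2 * f22 y)
    + Xbeam (-u1, u2) (fun y => u2 ^ 2 * f11 y + 2 * u1 * u2 * f12 y + u1 ^ 2 * f22 y)

/-- The mixed V-line transform. -/
def VlineM (u1 u2 : ℝ) (f11 f12 f22 : ℝ × ℝ → ℝ) : ℝ × ℝ → ℝ :=
  Xbeam (u1, u2) (fun y => -(u1 * u2) * f11 y + (u1 ^ 2 - u2 ^ 2) * f12 y + u1 * u2 * f22 y)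
    + Xbeam (-u1, u2) (fun y => u1 * u2 * f11 y + (u1 ^ 2 - u2 ^ 2) * f12 y - u1 * u2 * f22 y)

/-- The k-th moment longitudinal V-line transform. -/
def VlineLk (k : ℕ) (u1 u2 : ℝ) (f11 f12 f22 : ℝ × ℝ → ℝ) : ℝ × ℝ → ℝ :=
  Xmom k (u1, u2) (fun y => u1 ^ 2 * f11 y + 2 * u1 * u2 * f12 y + u2 ^ 2 * f22 y)
    + Xmom k (-u1, u2) (fun y => u1 ^ 2 * f11 y - 2 * u1 * u2 * f12 y + u2 ^ 2 * f22 y)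

/-- The k-th moment transverse V-line transform. -/
def VlineTk (k : ℕ) (u1 u2 : ℝ) (f11 f12 f22 : ℝ × ℝ → ℝ) : ℝ × ℝ → ℝ :=
  Xmom k (u1, u2) (fun y => u2 ^ 2 * f11 y - 2 * u1 * u2 * f12 y + u1 ^ 2 * f22 y)
    + Xmom k (-u1, u2) (fun y => u2 ^ 2 * f11 y + 2 * u1 * u2 * f12 y + u1 ^ 2 * f22 y)

/-- The k-th moment mixed V-line transform. -/
def VlineMk (k : ℕ) (u1 u2 : ℝ) (f11 f12 f22 : ℝ × ℝ → ℝ) : ℝ × ℝ → ℝ :=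
  Xmom k (u1, u2) (fun y => -(u1 * u2) * f11 y + (u1 ^ 2 - u2 ^ 2) * f12 y + u1 * u2 * f22 y)
    + Xmom k (-u1, u2) (fun y => u1 * u2 * f11 y + (u1 ^ 2 - u2 ^ 2) * f12 y - u1 * u2 * f22 y)


/-!
Since `u1² + u2² = 1`, the integrands of `L` and `T` add up to the trace `g = f11 + f22`, so
`(L + T) f = X_u g + X_v g`. For fields vanishing on a half-plane `{y₂ > c}`, directional
derivatives commute with every divergent beam transform along a direction pointing into that
half-plane, and `X_w (D_w h) = -h` by the fundamental theorem of calculus along the ray. Hence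
`D_u D_v X_{e2} (X_u g + X_v g) = X_{e2} (X_u D_u D_v g + X_v D_v D_u g) = -X_{e2} D_{u+v} g`,
and `u + v = 2 u2 e2` turns the right-hand side into `2 u2 g`.
-/

open Set Filter Topology

section RayIntegral

variable {V E : Type*} [NormedAddCommGroup V] [NormedSpace ℝ V] [NormedAddCommGroup E]

/-- Vanishing on the *open* half-space `{ℓ > c}` is inherited by the derivative. -/
def VanishesAbove (ℓ : V →L[ℝ] ℝ) (c : ℝ) (H : V → E) : Prop :=
  ∀ z, c < ℓ z → H z = 0

variable {ℓ : V →L[ℝ] ℝ} {c : ℝ} {w : V} {H K : V → E}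

lemma eventually_lt_apply_add_smul (hw : 0 < ℓ w) (x : V) :
    ∀ᶠ t : ℝ in atTop, c < ℓ (x + t • w) := by
  filter_upwards [(tendsto_atTop_add_const_left _ (ℓ x)
    (tendsto_id.atTop_mul_const hw)).eventually_gt_atTop c] with t ht
  simpa using ht

lemma exists_nonneg_eventually_le_apply_add_mul (hw : 0 < ℓ w) (x : V) :
    ∃ R, 0 ≤ R ∧ ∀ᶠ y in 𝓝 x, c ≤ ℓ y + R * ℓ w := by
  obtain ⟨R, hR, hR₀⟩ :=
    ((eventually_lt_apply_add_smul (c := c) hw x).and (eventually_ge_atTop 0)).exists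
  simp only [map_add, map_smul, smul_eq_mul] at hR
  refine ⟨R, hR₀, ?_⟩
  filter_upwards [continuousAt_const.eventually_lt (g := fun y => ℓ y + R * ℓ w)
    (by fun_prop) hR] with y hy
  exact hy.le

namespace VanishesAbove

lemma add (hH : VanishesAbove ℓ c H) (hK : VanishesAbove ℓ c K) : VanishesAbove ℓ c (H + K) :=
  fun z hz => by simp [hH z hz, hK z hz]

lemma eventually_apply_add_smul_eq_zero (hH : VanishesAbove ℓ c H) (hw : 0 < ℓ w) (x : V) :
    ∀ᶠ t : ℝ in atTop, H (x + t • w) = 0 :=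
  (eventually_lt_apply_add_smul hw x).mono fun _ => hH _

lemma integrableOn_ray (hH : VanishesAbove ℓ c H) (hc : Continuous H) (hw : 0 < ℓ w) (x : V) :
    IntegrableOn (fun t : ℝ => H (x + t • w)) (Ioi 0) := by
  obtain ⟨R, hR⟩ := eventually_atTop.1 (hH.eventually_apply_add_smul_eq_zero hw x)
  refine (Continuous.integrableOn_Ioc (a := 0) (b := R) (by fun_prop)).of_forall_sdiff_eq_zero
    measurableSet_Ioi fun t ht => hR t ?_
  exact le_of_not_ge fun h => ht.2 ⟨ht.1, h⟩

lemma fderiv [NormedSpace ℝ E] (hH : VanishesAbove ℓ c H) :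
    VanishesAbove ℓ c (fderiv ℝ H) := by
  intro z hz
  have hzero : H =ᶠ[𝓝 z] fun _ => 0 :=
    eventually_of_mem ((isOpen_lt continuous_const ℓ.continuous).mem_nhds hz) hH
  rw [hzero.fderiv_eq, fderiv_const_apply]

lemma apply {F : Type*} [NormedAddCommGroup F] [NormedSpace ℝ F] {H : V → V →L[ℝ] F}
    (hH : VanishesAbove ℓ c H) (m : V) : VanishesAbove ℓ c (fun z => H z m) :=
  fun z hz => by simp [hH z hz]

end VanishesAbove

variable [NormedSpace ℝ E]

def rayIntegral (w : V) (H : V → E) (x : V) : E :=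
  ∫ t in Ioi (0 : ℝ), H (x + t • w)

lemma VanishesAbove.rayIntegral (hH : VanishesAbove ℓ c H) (hw : 0 < ℓ w) :
    VanishesAbove ℓ c (rayIntegral w H) := by
  intro z hz
  refine setIntegral_eq_zero_of_forall_eq_zero fun t (ht : 0 < t) => hH _ ?_
  rw [map_add, map_smul, smul_eq_mul]
  nlinarith

lemma rayIntegral_neg : rayIntegral w (-H) = -rayIntegral w H :=
  funext fun _ => integral_neg _

lemma rayIntegral_smul (r : ℝ) : rayIntegral w (r • H) = r • rayIntegral w H :=
  funext fun _ => integral_smul r _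

lemma rayIntegral_add (hH : VanishesAbove ℓ c H) (hK : VanishesAbove ℓ c K)
    (hcH : Continuous H) (hcK : Continuous K) (hw : 0 < ℓ w) :
    rayIntegral w (H + K) = rayIntegral w H + rayIntegral w K :=
  funext fun x => integral_add (hH.integrableOn_ray hcH hw x) (hK.integrableOn_ray hcK hw x)

lemma rayIntegral_eq_intervalIntegral (hH : VanishesAbove ℓ c H) (hw : 0 < ℓ w) {x : V}
    {R : ℝ} (hR₀ : 0 ≤ R) (hR : c ≤ ℓ x + R * ℓ w) :
    rayIntegral w H x = ∫ t in 0..R, H (x + t • w) := by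
  rw [intervalIntegral.integral_of_le hR₀, rayIntegral]
  refine setIntegral_eq_of_subset_of_forall_sdiff_eq_zero measurableSet_Ioi Ioc_subset_Ioi_self
    fun t ht => hH _ ?_
  have hRt : R < t := lt_of_not_ge fun h => ht.2 ⟨ht.1, h⟩
  rw [map_add, map_smul, smul_eq_mul]
  nlinarith

lemma continuous_rayIntegral (hH : VanishesAbove ℓ c H) (hc : Continuous H) (hw : 0 < ℓ w) :
    Continuous (rayIntegral w H) := by
  refine continuous_iff_continuousAt.2 fun x => ?_
  obtain ⟨R, hR₀, hR⟩ := exists_nonneg_eventually_le_apply_add_mul (c := c) hw x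
  exact (intervalIntegral.continuous_parametric_intervalIntegral_of_continuous'
    (by fun_prop) 0 R).continuousAt.congr
    (hR.mono fun y hy => (rayIntegral_eq_intervalIntegral hH hw hR₀ hy).symm)

lemma rayIntegral_fderiv_apply_self [CompleteSpace E] (hH : VanishesAbove ℓ c H)
    (hC : ContDiff ℝ 1 H) (hw : 0 < ℓ w) (x : V) :
    rayIntegral w (fun z => fderiv ℝ H z w) x = -H x := by
  have hderiv : ∀ t ∈ Ici (0 : ℝ),
      HasDerivAt (fun t => H (x + t • w)) (fderiv ℝ H (x + t • w) w) t :=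
    fun t _ => (hC.differentiable one_ne_zero _).hasFDerivAt.comp_hasDerivAt t
      (((hasDerivAt_id t).smul_const w).const_add x |>.congr_deriv (one_smul ℝ w))
  have hlim : Tendsto (fun t : ℝ => H (x + t • w)) atTop (𝓝 0) :=
    tendsto_const_nhds.congr' (EventuallyEq.symm (hH.eventually_apply_add_smul_eq_zero hw x))
  exact (integral_Ioi_of_hasDerivAt_of_tendsto' hderiv
    ((hH.fderiv.apply w).integrableOn_ray
      ((hC.continuous_fderiv one_ne_zero).clm_apply continuous_const) hw x) hlim).trans
    (by simp)

variable [ProperSpace V]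

lemma hasFDerivAt_intervalIntegral_add_smul (hH : ContDiff ℝ 1 H) (w x : V) (a b : ℝ) :
    HasFDerivAt (fun y => ∫ t in a..b, H (y + t • w))
      (∫ t in a..b, fderiv ℝ H (x + t • w)) x := by
  have hH' : Continuous (fderiv ℝ H) := hH.continuous_fderiv one_ne_zero
  have := secondCountableTopologyEither_of_left ℝ (V →L[ℝ] E)
  obtain ⟨K, hK⟩ : ∃ K, ∀ p ∈ Metric.closedBall x 1 ×ˢ uIcc a b,
      ‖fderiv ℝ H (p.1 + p.2 • w)‖ ≤ K :=
    ((isCompact_closedBall x 1).prod isCompact_uIcc).exists_bound_of_continuousOn (by fun_prop)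
  refine intervalIntegral.hasFDerivAt_integral_of_dominated_of_fderiv_le (bound := fun _ => K)
    (F' := fun y t => fderiv ℝ H (y + t • w)) (Metric.ball_mem_nhds x one_pos)
    (Eventually.of_forall fun y => (by fun_prop : Continuous _).aestronglyMeasurable)
    ((by fun_prop : Continuous _).intervalIntegrable _ _)
    (by fun_prop : Continuous _).aestronglyMeasurable
    (Eventually.of_forall fun t ht y hy =>
      hK (y, t) ⟨Metric.ball_subset_closedBall hy, uIoc_subset_uIcc ht⟩)
    intervalIntegrable_const
    (Eventually.of_forall fun t _ y _ => ?_)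
  simpa [Function.comp_def] using (hH.differentiable one_ne_zero _).hasFDerivAt.comp y
    ((hasFDerivAt_id y).add_const (t • w))

lemma hasFDerivAt_rayIntegral (hH : VanishesAbove ℓ c H) (hC : ContDiff ℝ 1 H) (hw : 0 < ℓ w)
    (x : V) : HasFDerivAt (rayIntegral w H) (rayIntegral w (fderiv ℝ H) x) x := by
  obtain ⟨R, hR₀, hR⟩ := exists_nonneg_eventually_le_apply_add_mul (c := c) hw x
  rw [rayIntegral_eq_intervalIntegral hH.fderiv hw hR₀ hR.self_of_nhds]
  exact (hasFDerivAt_intervalIntegral_add_smul hC w x 0 R).congr_of_eventuallyEq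
    (hR.mono fun y hy => rayIntegral_eq_intervalIntegral hH hw hR₀ hy)

lemma fderiv_rayIntegral (hH : VanishesAbove ℓ c H) (hC : ContDiff ℝ 1 H) (hw : 0 < ℓ w) :
    fderiv ℝ (rayIntegral w H) = rayIntegral w (fderiv ℝ H) :=
  funext fun x => (hasFDerivAt_rayIntegral hH hC hw x).fderiv

lemma contDiff_rayIntegral (hH : VanishesAbove ℓ c H) (hC : ContDiff ℝ 1 H) (hw : 0 < ℓ w) :
    ContDiff ℝ 1 (rayIntegral w H) := by
  refine contDiff_one_iff_fderiv.2
    ⟨fun x => (hasFDerivAt_rayIntegral hH hC hw x).differentiableAt, ?_⟩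
  rw [fderiv_rayIntegral hH hC hw]
  exact continuous_rayIntegral hH.fderiv (hC.continuous_fderiv one_ne_zero) hw

lemma fderiv_rayIntegral_apply (hH : VanishesAbove ℓ c H) (hC : ContDiff ℝ 1 H)
    (hw : 0 < ℓ w) (x m : V) :
    fderiv ℝ (rayIntegral w H) x m = rayIntegral w (fun z => fderiv ℝ H z m) x := by
  rw [fderiv_rayIntegral hH hC hw]
  exact ContinuousLinearMap.integral_apply
    (hH.fderiv.integrableOn_ray (hC.continuous_fderiv one_ne_zero) hw x) m

end RayIntegral

section Beam

variable {ℓ : (ℝ × ℝ) →L[ℝ] ℝ} {c : ℝ} {w : ℝ × ℝ} {h k : ℝ × ℝ → ℝ}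

lemma Xbeam_eq_rayIntegral : Xbeam w h = rayIntegral w h := rfl

lemma Dir_add_left (a b : ℝ × ℝ) : Dir (a + b) h = Dir a h + Dir b h :=
  funext fun x => map_add (fderiv ℝ h x) a b

lemma Dir_smul_left (r : ℝ) (a : ℝ × ℝ) : Dir (r • a) h = r • Dir a h :=
  funext fun x => map_smul (fderiv ℝ h x) r a

lemma Dir_add (hh : Differentiable ℝ h) (hk : Differentiable ℝ k) (m : ℝ × ℝ) :
    Dir m (h + k) = Dir m h + Dir m k :=
  funext fun x => by simp [Dir, fderiv_add (hh x) (hk x)]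

lemma Dir_comm (hh : ContDiff ℝ 2 h) (a b : ℝ × ℝ) : Dir a (Dir b h) = Dir b (Dir a h) := by
  funext x
  have hd : DifferentiableAt ℝ (fderiv ℝ h) x :=
    (hh.fderiv_right le_rfl).differentiable one_ne_zero x
  change fderiv ℝ (fun y => fderiv ℝ h y b) x a = fderiv ℝ (fun y => fderiv ℝ h y a) x b
  simp only [fderiv_clm_apply hd (differentiableAt_const _), fderiv_const_apply]
  simpa using hh.contDiffAt.isSymmSndFDerivAt (by simp) a b

lemma ContDiff.Dir {n : ℕ} (hh : ContDiff ℝ (n + 1) h) (m : ℝ × ℝ) :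
    ContDiff ℝ n (Dir m h) :=
  (hh.fderiv_right le_rfl).clm_apply contDiff_const

lemma VanishesAbove.Dir (hh : VanishesAbove ℓ c h) (m : ℝ × ℝ) :
    VanishesAbove ℓ c (Dir m h) :=
  hh.fderiv.apply m

lemma Dir_Xbeam (hh : VanishesAbove ℓ c h) (hC : ContDiff ℝ 1 h) (hw : 0 < ℓ w)
    (m : ℝ × ℝ) :
    Dir m (Xbeam w h) = Xbeam w (Dir m h) :=
  funext fun x => fderiv_rayIntegral_apply hh hC hw x m

lemma Xbeam_Dir_self (hh : VanishesAbove ℓ c h) (hC : ContDiff ℝ 1 h) (hw : 0 < ℓ w) :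
    Xbeam w (Dir w h) = -h :=
  funext fun x => rayIntegral_fderiv_apply_self hh hC hw x

end Beam

section VLine

variable {ℓ : (ℝ × ℝ) →L[ℝ] ℝ} {c : ℝ} {u v e : ℝ × ℝ} {g : ℝ × ℝ → ℝ}

lemma Dir_Xbeam_Xbeam_add_Xbeam (hg : VanishesAbove ℓ c g) (hC : ContDiff ℝ 1 g)
    (hu : 0 < ℓ u) (hv : 0 < ℓ v) (he : 0 < ℓ e) (m : ℝ × ℝ) :
    Dir m (Xbeam e (Xbeam u g + Xbeam v g))
      = Xbeam e (Xbeam u (Dir m g) + Xbeam v (Dir m g)) := by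
  have hX : ∀ {w}, 0 < ℓ w → VanishesAbove ℓ c (Xbeam w g) ∧ ContDiff ℝ 1 (Xbeam w g) :=
    fun hw => ⟨hg.rayIntegral hw, contDiff_rayIntegral hg hC hw⟩
  rw [Dir_Xbeam ((hX hu).1.add (hX hv).1) ((hX hu).2.add (hX hv).2) he,
    Dir_add ((hX hu).2.differentiable one_ne_zero) ((hX hv).2.differentiable one_ne_zero),
    Dir_Xbeam hg hC hu, Dir_Xbeam hg hC hv]

lemma Dir_Dir_Xbeam_Xbeam_add_Xbeam (hg : VanishesAbove ℓ c g) (hC : ContDiff ℝ 2 g)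
    (hu : 0 < ℓ u) (hv : 0 < ℓ v) (he : 0 < ℓ e) :
    Dir u (Dir v (Xbeam e (Xbeam u g + Xbeam v g))) = -Xbeam e (Dir (u + v) g) := by
  calc Dir u (Dir v (Xbeam e (Xbeam u g + Xbeam v g)))
      = Dir u (Xbeam e (Xbeam u (Dir v g) + Xbeam v (Dir v g))) := by
        rw [Dir_Xbeam_Xbeam_add_Xbeam hg (hC.of_le one_le_two) hu hv he]
    _ = Xbeam e (Xbeam u (Dir u (Dir v g)) + Xbeam v (Dir v (Dir u g))) := by
        rw [Dir_Xbeam_Xbeam_add_Xbeam (hg.Dir v) (hC.Dir v) hu hv he, Dir_comm hC u v]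
    _ = -Xbeam e (Dir (u + v) g) := by
        rw [Xbeam_Dir_self (hg.Dir v) (hC.Dir v) hu, Xbeam_Dir_self (hg.Dir u) (hC.Dir u) hv,
          Dir_add_left, add_comm, ← neg_add]
        exact rayIntegral_neg

lemma VlineL_add_VlineT {u1 u2 : ℝ} (hu : u1 ^ 2 + u2 ^ 2 = 1) {f11 f12 f22 : ℝ × ℝ → ℝ}
    (h11 : Continuous f11) (h12 : Continuous f12) (h22 : Continuous f22)
    (s11 : VanishesAbove ℓ c f11) (s12 : VanishesAbove ℓ c f12) (s22 : VanishesAbove ℓ c f22)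
    (hℓu : 0 < ℓ (u1, u2)) (hℓv : 0 < ℓ (-u1, u2)) :
    VlineL u1 u2 f11 f12 f22 + VlineT u1 u2 f11 f12 f22
      = Xbeam (u1, u2) (f11 + f22) + Xbeam (-u1, u2) (f11 + f22) := by
  simp only [VlineL, VlineT, Xbeam_eq_rayIntegral]
  rw [add_add_add_comm, ← rayIntegral_add (c := c) _ _ _ _ hℓu,
    ← rayIntegral_add (c := c) _ _ _ _ hℓv]
  · congr 2 <;> ext y <;> simp only [Pi.add_apply] <;> linear_combination (f11 y + f22 y) * hu
  all_goals first
    | fun_prop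
    | exact fun z hz => by simp [s11 z hz, s12 z hz, s22 z hz]

end VLine

lemma SuppInDisc.vanishesAbove {h : ℝ × ℝ → ℝ} (hh : SuppInDisc h) :
    VanishesAbove (ContinuousLinearMap.snd ℝ ℝ ℝ) 1 h := fun z (hz : 1 < z.2) =>
  hh z (by nlinarith [sq_nonneg z.1])

theorem trace_recovery_general
    (u1 u2 : ℝ) (hu : u1 ^ 2 + u2 ^ 2 = 1) (hu2 : 0 < u2)
    (f11 f12 f22 : ℝ × ℝ → ℝ)
    (h11 : ContDiff ℝ 2 f11) (h12 : ContDiff ℝ 2 f12) (h22 : ContDiff ℝ 2 f22)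
    (s11 : SuppInDisc f11) (s12 : SuppInDisc f12) (s22 : SuppInDisc f22)
    (x : ℝ × ℝ) :
    f11 x + f22 x =
      (1 / (2 * u2)) *
        Dir (u1, u2) (Dir (-u1, u2)
          (Xbeam ((0 : ℝ), (1 : ℝ))
            (VlineL u1 u2 f11 f12 f22 + VlineT u1 u2 f11 f12 f22))) x := by
  have hg : VanishesAbove (ContinuousLinearMap.snd ℝ ℝ ℝ) 1 (f11 + f22) :=
    s11.vanishesAbove.add s22.vanishesAbove
  have hsum : ((u1, u2) + (-u1, u2) : ℝ × ℝ) = (2 * u2) • ((0 : ℝ), (1 : ℝ)) := by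
    ext <;> simp
    ring
  rw [VlineL_add_VlineT hu h11.continuous h12.continuous h22.continuous s11.vanishesAbove
      s12.vanishesAbove s22.vanishesAbove hu2 hu2,
    Dir_Dir_Xbeam_Xbeam_add_Xbeam hg (h11.add h22) hu2 hu2 one_pos, hsum, Dir_smul_left,
    Xbeam_eq_rayIntegral, rayIntegral_smul, ← Xbeam_eq_rayIntegral,
    Xbeam_Dir_self hg ((h11.add h22).of_le one_le_two) one_pos]
  simp only [Pi.neg_apply, Pi.smul_apply, Pi.add_apply, smul_eq_mul]
  field_simp

/-- recovery of the trace of a symmetric 2-tensor field from its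
longitudinal and transverse V-line transforms. -/
theorem trace_recovery
    (u1 u2 : ℝ) (hu : u1 ^ 2 + u2 ^ 2 = 1) (hu1 : 0 < u1) (hu2 : 0 < u2)
    (f11 f12 f22 : ℝ × ℝ → ℝ)
    (h11 : ContDiff ℝ 2 f11) (h12 : ContDiff ℝ 2 f12) (h22 : ContDiff ℝ 2 f22)
    (s11 : SuppInDisc f11) (s12 : SuppInDisc f12) (s22 : SuppInDisc f22)
    (x : ℝ × ℝ) :
    f11 x + f22 x =
      (1 / (2 * u2)) *
        Dir (u1, u2) (Dir (-u1, u2)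
          (Xbeam ((0 : ℝ), (1 : ℝ))
            (VlineL u1 u2 f11 f12 f22 + VlineT u1 u2 f11 f12 f22))) x :=
  trace_recovery_general u1 u2 hu hu2 f11 f12 f22 h11 h12 h22 s11 s12 s22 x
end
end

section
/- Assume u1 = u2 = 1/√2. Let f = (f11, f12, f22) ∈ C²_c(S²; D1). Then for every x ∈ ℝ²: f12(x) = (1/(4 u1)) · D_u D_v G (x), where G(y) = ∫₀^∞ (Lf − Tf)(y − t e1) dt; and (f22 − f11)(x) = (1/u1) · D_u D_v H (x), where H(y) = ∫₀^∞ Mf(y − t e1) dt. -/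
/-!
With `u1 = u2 = a`, the integrands of `Lf - Tf` along `u` and `v` are `4a² f12` and `-4a² f12`,
and those of `Mf` are `a² (f22 - f11)` and its negative, so both data have the form
`X_u g - X_v g`. Differentiating under the integral sign, `D_z X_w g = X_w D_z g`, and by the
fundamental theorem of calculus along rays, `D_w X_w g = -g`. Hence
`D_v (X_u g - X_v g) = X_u D_v g + g`, whose `D_u`-derivative is `D_(u - v) g = -2a D_m g`
with `m = -e1`, and a last application of `X_m D_m = -id` gives
`D_u D_v X_m (X_u g - X_v g) = 2a g`. Every interchange is justified because the functions
involved are differentiable with bounded derivative and vanish far out along the rays used;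
for `X_w g` along `m` this holds because `m` and `w` are linearly independent.
-/

noncomputable section

open MeasureTheory

open Set Filter Topology

section Escape

variable {E : Type*} [NormedAddCommGroup E]

lemma eventually_forall_lt_norm_add (x : E) {c : ℝ} (hc : 0 < c) (R : ℝ) :
    ∀ᶠ p : E × ℝ in 𝓝 x ×ˢ atTop, ∀ v : E, c * p.2 ≤ ‖v‖ → R < ‖p.1 + v‖ := by
  have hy : ∀ᶠ y in 𝓝 x, ‖y‖ < ‖x‖ + 1 :=
    continuous_norm.continuousAt.eventually_lt continuousAt_const (lt_add_one _)
  have ht : ∀ᶠ t in atTop, (R + ‖x‖ + 1) / c < t := eventually_gt_atTop _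
  filter_upwards [hy.prod_inl atTop, ht.prod_inr (𝓝 x)] with p hy ht v hv
  have htriangle := norm_sub_le (p.1 + v) p.1
  rw [add_sub_cancel_left] at htriangle
  linarith [(div_lt_iff₀' hc).1 ht]

lemma LinearIndependent.exists_pos_mul_abs_le_norm [NormedSpace ℝ E] {m w : E}
    (h : LinearIndependent ℝ ![m, w]) :
    ∃ c > 0, ∀ t s : ℝ, c * |t| ≤ ‖t • m + s • w‖ := by
  let ψ : ℝ × ℝ →ₗ[ℝ] E :=
    (LinearMap.fst ℝ ℝ ℝ).smulRight m + (LinearMap.snd ℝ ℝ ℝ).smulRight w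
  have hψ : Function.Injective ψ := by
    rw [← LinearMap.ker_eq_bot, LinearMap.ker_eq_bot']
    rintro ⟨t, s⟩ hts
    obtain ⟨rfl, rfl⟩ := LinearIndependent.pair_iff.1 h t s hts
    rfl
  obtain ⟨K, hK, hanti⟩ := ψ.injective_iff_antilipschitz.1 hψ
  refine ⟨(K : ℝ)⁻¹, by positivity, fun t s => ?_⟩
  rw [inv_mul_le_iff₀ (by positivity)]
  exact (norm_fst_le (t, s)).trans (hanti.le_mul_norm (map_zero ψ) (t, s))

lemma HasCompactSupport.exists_eq_zero_of_lt_norm {F : Type*} [Zero F] {g : E → F}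
    (hg : HasCompactSupport g) : ∃ R > 0, ∀ z, R < ‖z‖ → g z = 0 := by
  obtain ⟨R, hR0, hR⟩ := hg.isCompact.isBounded.subset_closedBall_lt 0 0
  refine ⟨R, hR0, fun z hz => image_eq_zero_of_notMem_tsupport fun hmem => ?_⟩
  have := hR hmem
  rw [Metric.mem_closedBall, dist_zero_right] at this
  linarith

lemma HasCompactSupport.eventually_comp_ray_eq_zero [NormedSpace ℝ E] {F : Type*} [Zero F]
    {g : E → F} (hg : HasCompactSupport g) {w : E} (hw : w ≠ 0) (x : E) :
    ∀ᶠ p : E × ℝ in 𝓝 x ×ˢ atTop, g (p.1 + p.2 • w) = 0 := by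
  obtain ⟨R, -, hR⟩ := hg.exists_eq_zero_of_lt_norm
  filter_upwards [eventually_forall_lt_norm_add x (norm_pos_iff.2 hw) R] with p hp
  refine hR _ (hp _ ?_)
  rw [norm_smul, Real.norm_eq_abs, mul_comm]
  exact mul_le_mul_of_nonneg_right (le_abs_self _) (norm_nonneg _)

lemma exists_bound_norm_integral_comp_ray [NormedSpace ℝ E] {F : Type*} [NormedAddCommGroup F]
    [NormedSpace ℝ F] {G : E → F} (hG : HasCompactSupport G) (hGb : ∃ C, ∀ z, ‖G z‖ ≤ C)
    {w : E} (hw : w ≠ 0) : ∃ B, ∀ y, ‖∫ t in Ioi (0 : ℝ), G (y + t • w)‖ ≤ B := by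
  obtain ⟨C, hC⟩ := hGb
  obtain ⟨R, hR0, hR⟩ := hG.exists_eq_zero_of_lt_norm
  have hC0 : 0 ≤ C := (norm_nonneg _).trans (hC 0)
  refine ⟨2 * R / ‖w‖ * C, fun y => ?_⟩
  set S := {t : ℝ | ‖y + t • w‖ ≤ R}
  have hS : MeasurableSet S := (isClosed_le (by fun_prop) continuous_const).measurableSet
  have hvol : volume S ≤ ENNReal.ofReal (2 * R / ‖w‖) := by
    refine (Real.volume_le_diam S).trans (Metric.ediam_le fun t ht t' ht' => ?_)
    rw [edist_dist, Real.dist_eq]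
    refine ENNReal.ofReal_le_ofReal ?_
    rw [le_div_iff₀ (norm_pos_iff.2 hw), ← Real.norm_eq_abs, ← norm_smul, sub_smul]
    calc ‖t • w - t' • w‖ = ‖(y + t • w) - (y + t' • w)‖ := by rw [add_sub_add_left_eq_sub]
      _ ≤ ‖y + t • w‖ + ‖y + t' • w‖ := norm_sub_le _ _
      _ ≤ 2 * R := by linarith [show ‖y + t • w‖ ≤ R from ht, show ‖y + t' • w‖ ≤ R from ht']
  have hbound : ∀ t, ‖G (y + t • w)‖ ≤ S.indicator (fun _ => C) t := by
    intro t
    by_cases ht : t ∈ S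
    · rw [indicator_of_mem ht]
      exact hC _
    · rw [indicator_of_notMem ht, hR _ (not_le.1 ht), norm_zero]
  have hint : Integrable (S.indicator fun _ => C) :=
    (integrable_indicator_iff hS).2
      (integrableOn_const (hvol.trans_lt ENNReal.ofReal_lt_top).ne enorm_ne_top)
  calc ‖∫ t in Ioi 0, G (y + t • w)‖ ≤ ∫ t in Ioi 0, S.indicator (fun _ => C) t :=
        norm_integral_le_of_norm_le hint.integrableOn (ae_of_all _ hbound)
    _ ≤ ∫ t, S.indicator (fun _ => C) t :=
        integral_mono_measure Measure.restrict_le_self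
          (ae_of_all _ (indicator_nonneg fun _ _ => hC0)) hint
    _ = volume.real S * C := by rw [integral_indicator_const _ hS, smul_eq_mul]
    _ ≤ 2 * R / ‖w‖ * C := by
        gcongr
        exact ENNReal.toReal_le_of_le_ofReal (by positivity) hvol

end Escape

lemma integrableOn_Ioi_of_eventually_eq_zero {F : Type*} [NormedAddCommGroup F] {f : ℝ → F}
    (hf : Continuous f) (h0 : ∀ᶠ t in atTop, f t = 0) (a : ℝ) : IntegrableOn f (Ioi a) := by
  obtain ⟨T, hT⟩ := eventually_atTop.1 h0
  have h1 : IntegrableOn f (Ioc a T) := hf.integrableOn_Icc.mono_set Ioc_subset_Icc_self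
  have h2 : IntegrableOn f (Ioi T) :=
    integrableOn_zero.congr_fun (fun t ht => (hT t (le_of_lt ht)).symm) measurableSet_Ioi
  exact (h1.union h2).mono_set Ioi_subset_Ioc_union_Ioi

lemma HasCompactSupport.integrableOn_comp_ray {E : Type*} [NormedAddCommGroup E]
    [NormedSpace ℝ E] {g : E → ℝ} (hgc : HasCompactSupport g) (hg : Continuous g) {w : E}
    (hw : w ≠ 0) (x : E) : IntegrableOn (fun t => g (x + t • w)) (Ioi (0 : ℝ)) :=
  integrableOn_Ioi_of_eventually_eq_zero (hg.comp (by fun_prop))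
    ((tendsto_const_nhds.prodMk tendsto_id).eventually (hgc.eventually_comp_ray_eq_zero hw x)) 0

lemma SuppInDisc.hasCompactSupport {h : ℝ × ℝ → ℝ} (hs : SuppInDisc h) : HasCompactSupport h := by
  refine HasCompactSupport.intro (isCompact_closedBall (0 : ℝ × ℝ) 1) fun q hq => hs q ?_
  rw [Metric.mem_closedBall, dist_zero_right, not_le, Prod.norm_def, lt_max_iff,
    Real.norm_eq_abs, Real.norm_eq_abs] at hq
  rcases hq with h | h
  · nlinarith [sq_nonneg q.2, sq_abs q.1]
  · nlinarith [sq_nonneg q.1, sq_abs q.2]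

structure BeamAdmissible (w : ℝ × ℝ) (h : ℝ × ℝ → ℝ) : Prop where
  differentiable : Differentiable ℝ h
  exists_bound_fderiv : ∃ C, ∀ y, ‖fderiv ℝ h y‖ ≤ C
  eventually_eq_zero : ∀ x, ∀ᶠ p : (ℝ × ℝ) × ℝ in 𝓝 x ×ˢ atTop, h (p.1 + p.2 • w) = 0

namespace BeamAdmissible

variable {w : ℝ × ℝ} {f g h : ℝ × ℝ → ℝ}

lemma eventually_fderiv_eq_zero (hh : BeamAdmissible w h) (x : ℝ × ℝ) :
    ∀ᶠ p : (ℝ × ℝ) × ℝ in 𝓝 x ×ˢ atTop, fderiv ℝ h (p.1 + p.2 • w) = 0 := by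
  obtain ⟨U, hU, V, hV, hUV⟩ := eventually_prod_iff.1 (hh.eventually_eq_zero x)
  refine eventually_prod_iff.2 ⟨_, hU.eventually_nhds, V, hV, fun {y} hy {t} ht => ?_⟩
  have hshift : Tendsto (fun z => z - t • w) (𝓝 (y + t • w)) (𝓝 y) := by
    simpa using (continuous_sub_right (t • w)).tendsto (y + t • w)
  have hzero : h =ᶠ[𝓝 (y + t • w)] 0 := by
    filter_upwards [hshift.eventually hy] with z hz
    simpa using hUV hz ht
  rw [hzero.fderiv_eq]
  exact fderiv_const_apply 0

lemma eventually_eq_zero_atTop (hh : BeamAdmissible w h) (x : ℝ × ℝ) :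
    ∀ᶠ t : ℝ in atTop, h (x + t • w) = 0 :=
  (tendsto_const_nhds.prodMk tendsto_id).eventually (hh.eventually_eq_zero x)

lemma integrableOn (hh : BeamAdmissible w h) (x : ℝ × ℝ) :
    IntegrableOn (fun t => h (x + t • w)) (Ioi (0 : ℝ)) :=
  integrableOn_Ioi_of_eventually_eq_zero (hh.differentiable.continuous.comp (by fun_prop))
    (hh.eventually_eq_zero_atTop x) 0

lemma exists_dominating (hh : BeamAdmissible w h) (x : ℝ × ℝ) :
    ∃ U ∈ 𝓝 x, ∃ bound : ℝ → ℝ, IntegrableOn bound (Ioi (0 : ℝ)) ∧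
      ∀ t ∈ Ioi (0 : ℝ), ∀ y ∈ U, ‖fderiv ℝ h (y + t • w)‖ ≤ bound t := by
  obtain ⟨C, hC⟩ := hh.exists_bound_fderiv
  obtain ⟨U, hU, V, hV, hUV⟩ := eventually_prod_iff.1 (hh.eventually_fderiv_eq_zero x)
  obtain ⟨T, hT⟩ := eventually_atTop.1 hV
  refine ⟨{y | U y}, hU, (Ioc 0 T).indicator fun _ => C,
    ((integrableOn_const measure_Ioc_lt_top.ne).integrable_indicator
      measurableSet_Ioc).integrableOn, fun t ht y hy => ?_⟩
  by_cases htT : t ≤ T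
  · rw [indicator_of_mem (show t ∈ Ioc 0 T from ⟨ht, htT⟩)]
    exact hC _
  · rw [indicator_of_notMem fun h => htT h.2, hUV hy (hT t (not_le.1 htT).le), norm_zero]

lemma integrableOn_fderiv (hh : BeamAdmissible w h) (x : ℝ × ℝ) :
    IntegrableOn (fun t => fderiv ℝ h (x + t • w)) (Ioi (0 : ℝ)) := by
  obtain ⟨U, hU, bound, hbound, hle⟩ := hh.exists_dominating x
  refine hbound.mono' ?_ ((ae_restrict_iff' measurableSet_Ioi).2
    (ae_of_all _ fun t ht => hle t ht x (mem_of_mem_nhds hU)))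
  exact ((measurable_fderiv ℝ h).comp
    (by fun_prop : Continuous fun t : ℝ => x + t • w).measurable).aestronglyMeasurable

lemma hasFDerivAt_xbeam (hh : BeamAdmissible w h) (x : ℝ × ℝ) :
    HasFDerivAt (Xbeam w h) (∫ t in Ioi (0 : ℝ), fderiv ℝ h (x + t • w)) x := by
  obtain ⟨U, hU, bound, hbound, hle⟩ := hh.exists_dominating x
  refine hasFDerivAt_integral_of_dominated_of_fderiv_le hU
    (Eventually.of_forall fun y => (hh.integrableOn y).aestronglyMeasurable)
    (hh.integrableOn x) (hh.integrableOn_fderiv x).aestronglyMeasurable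
    ((ae_restrict_iff' measurableSet_Ioi).2 (ae_of_all _ hle)) hbound
    (ae_of_all _ fun t y _ => ?_)
  have hcomp := (hh.differentiable (y + t • w)).hasFDerivAt.comp y
    ((hasFDerivAt_id y).add_const (t • w))
  rwa [ContinuousLinearMap.comp_id] at hcomp

lemma differentiable_xbeam (hh : BeamAdmissible w h) : Differentiable ℝ (Xbeam w h) :=
  fun x => (hh.hasFDerivAt_xbeam x).differentiableAt

lemma dir_xbeam (hh : BeamAdmissible w h) (z : ℝ × ℝ) :
    Dir z (Xbeam w h) = Xbeam w (Dir z h) := by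
  funext x
  rw [Dir, (hh.hasFDerivAt_xbeam x).fderiv]
  exact ContinuousLinearMap.integral_apply (hh.integrableOn_fderiv x) z

lemma xbeam_dir_self (hh : BeamAdmissible w h) : Xbeam w (Dir w h) = -h := by
  funext x
  have hder : ∀ t ∈ Ioi (0 : ℝ),
      HasDerivAt (fun s => h (x + s • w)) (Dir w h (x + t • w)) t := fun t _ => by
    have hray : HasDerivAt (fun s : ℝ => x + s • w) w t := by
      simpa using ((hasDerivAt_id t).smul_const w).const_add x
    exact (hh.differentiable _).hasFDerivAt.comp_hasDerivAt t hray
  have hlim : Tendsto (fun s => h (x + s • w)) atTop (𝓝 0) :=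
    tendsto_const_nhds.congr' ((hh.eventually_eq_zero_atTop x).mono fun t ht => ht.symm)
  simpa [Xbeam] using integral_Ioi_of_hasDerivAt_of_tendsto
    (hh.differentiable.continuous.comp (by fun_prop)).continuousWithinAt hder
    ((hh.integrableOn_fderiv x).apply_continuousLinearMap w) hlim

protected lemma add (hf : BeamAdmissible w f) (hg : BeamAdmissible w g) :
    BeamAdmissible w (f + g) where
  differentiable := hf.differentiable.add hg.differentiable
  exists_bound_fderiv := by
    obtain ⟨Cf, hCf⟩ := hf.exists_bound_fderiv
    obtain ⟨Cg, hCg⟩ := hg.exists_bound_fderiv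
    refine ⟨Cf + Cg, fun y => ?_⟩
    rw [fderiv_add (hf.differentiable y) (hg.differentiable y)]
    exact (norm_add_le _ _).trans (add_le_add (hCf y) (hCg y))
  eventually_eq_zero x := by
    filter_upwards [hf.eventually_eq_zero x, hg.eventually_eq_zero x] with p hfp hgp
    simp [hfp, hgp]

protected lemma neg (hf : BeamAdmissible w f) : BeamAdmissible w (-f) where
  differentiable := hf.differentiable.neg
  exists_bound_fderiv := by
    simpa only [fderiv_neg, norm_neg] using hf.exists_bound_fderiv
  eventually_eq_zero x := by
    filter_upwards [hf.eventually_eq_zero x] with p hfp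
    simp [hfp]

protected lemma sub (hf : BeamAdmissible w f) (hg : BeamAdmissible w g) :
    BeamAdmissible w (f - g) := by
  simpa only [sub_eq_add_neg] using hf.add hg.neg

end BeamAdmissible

lemma HasCompactSupport.beamAdmissible {w : ℝ × ℝ} {g : ℝ × ℝ → ℝ} (hg : ContDiff ℝ 1 g)
    (hgc : HasCompactSupport g) (hw : w ≠ 0) : BeamAdmissible w g where
  differentiable := hg.differentiable one_ne_zero
  exists_bound_fderiv :=
    (hgc.fderiv (𝕜 := ℝ)).exists_bound_of_continuous (hg.continuous_fderiv one_ne_zero)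
  eventually_eq_zero := hgc.eventually_comp_ray_eq_zero hw

lemma HasCompactSupport.beamAdmissible_xbeam {m w : ℝ × ℝ} {g : ℝ × ℝ → ℝ}
    (hg : ContDiff ℝ 1 g) (hgc : HasCompactSupport g) (hmw : LinearIndependent ℝ ![m, w]) :
    BeamAdmissible m (Xbeam w g) := by
  have hgw : BeamAdmissible w g := hgc.beamAdmissible hg (by simpa using hmw.ne_zero 1)
  refine ⟨hgw.differentiable_xbeam, ?_, fun x => ?_⟩
  · obtain ⟨B, hB⟩ := exists_bound_norm_integral_comp_ray (hgc.fderiv (𝕜 := ℝ))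
      ((hgc.fderiv (𝕜 := ℝ)).exists_bound_of_continuous (hg.continuous_fderiv one_ne_zero))
      (by simpa using hmw.ne_zero 1)
    exact ⟨B, fun y => (hgw.hasFDerivAt_xbeam y).fderiv ▸ hB y⟩
  · obtain ⟨c, hc, hcmw⟩ := hmw.exists_pos_mul_abs_le_norm
    obtain ⟨R, -, hR⟩ := hgc.exists_eq_zero_of_lt_norm
    filter_upwards [eventually_forall_lt_norm_add x hc R] with p hp
    refine integral_eq_zero_of_ae (ae_of_all _ fun s => hR _ ?_)
    rw [add_assoc]
    exact hp _ ((mul_le_mul_of_nonneg_left (le_abs_self _) hc.le).trans (hcmw _ _))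

lemma xbeam_smul (c : ℝ) (w : ℝ × ℝ) (h : ℝ × ℝ → ℝ) : Xbeam w (c • h) = c • Xbeam w h := by
  funext x
  exact integral_smul c _

lemma xbeam_sub_xbeam {w : ℝ × ℝ} {f g : ℝ × ℝ → ℝ} (hf : Continuous f)
    (hfc : HasCompactSupport f) (hg : Continuous g) (hgc : HasCompactSupport g) (hw : w ≠ 0) :
    Xbeam w f - Xbeam w g = Xbeam w (f - g) := by
  funext x
  exact (integral_sub (hfc.integrableOn_comp_ray hf hw x) (hgc.integrableOn_comp_ray hg hw x)).symm

lemma dir_smul (c : ℝ) (w : ℝ × ℝ) (h : ℝ × ℝ → ℝ) : Dir w (c • h) = c • Dir w h := by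
  funext x
  simp [Dir, fderiv_const_smul_field]

lemma dir_smul_left (c : ℝ) (w : ℝ × ℝ) (h : ℝ × ℝ → ℝ) : Dir (c • w) h = c • Dir w h := by
  funext x
  simp [Dir]

lemma dir_sub_dir (u v : ℝ × ℝ) (h : ℝ × ℝ → ℝ) : Dir u h - Dir v h = Dir (u - v) h := by
  funext x
  simp [Dir]

lemma dir_add {f g : ℝ × ℝ → ℝ} (hf : Differentiable ℝ f) (hg : Differentiable ℝ g)
    (w : ℝ × ℝ) : Dir w (f + g) = Dir w f + Dir w g := by
  funext x
  simp [Dir, fderiv_add (hf x) (hg x)]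

lemma dir_sub {f g : ℝ × ℝ → ℝ} (hf : Differentiable ℝ f) (hg : Differentiable ℝ g)
    (w : ℝ × ℝ) : Dir w (f - g) = Dir w f - Dir w g := by
  funext x
  simp [Dir, fderiv_sub (hf x) (hg x)]

theorem dir_dir_xbeam_xbeam_sub {u v m : ℝ × ℝ} {c : ℝ} (huv : u - v = c • m)
    (hmu : LinearIndependent ℝ ![m, u]) (hmv : LinearIndependent ℝ ![m, v])
    {g : ℝ × ℝ → ℝ} (hg : ContDiff ℝ 2 g) (hgc : HasCompactSupport g) :
    Dir u (Dir v (Xbeam m (Xbeam u g - Xbeam v g))) = -c • g := by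
  have hg1 : ContDiff ℝ 1 g := hg.of_le one_le_two
  have hP : ContDiff ℝ 1 (Dir v g) :=
    (hg.fderiv_right (by norm_num : (1 : WithTop ℕ∞) + 1 ≤ 2)).clm_apply contDiff_const
  have hPc : HasCompactSupport (Dir v g) := hgc.fderiv_apply (𝕜 := ℝ) v
  have hgu := hgc.beamAdmissible hg1 (by simpa using hmu.ne_zero 1)
  have hgv := hgc.beamAdmissible hg1 (by simpa using hmv.ne_zero 1)
  have hgm := hgc.beamAdmissible hg1 (by simpa using hmu.ne_zero 0)
  have hPu := hPc.beamAdmissible hP (by simpa using hmu.ne_zero 1)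
  have hF : BeamAdmissible m (Xbeam u g - Xbeam v g) :=
    (hgc.beamAdmissible_xbeam hg1 hmu).sub (hgc.beamAdmissible_xbeam hg1 hmv)
  have hQ : BeamAdmissible m (Xbeam u (Dir v g) + g) :=
    (hPc.beamAdmissible_xbeam hP hmu).add hgm
  have hDvF : Dir v (Xbeam u g - Xbeam v g) = Xbeam u (Dir v g) + g := by
    rw [dir_sub hgu.differentiable_xbeam hgv.differentiable_xbeam, hgu.dir_xbeam,
      hgv.dir_xbeam, hgv.xbeam_dir_self, sub_neg_eq_add]
  have hDuQ : Dir u (Xbeam u (Dir v g) + g) = c • Dir m g := by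
    rw [dir_add hPu.differentiable_xbeam hgu.differentiable, hPu.dir_xbeam, hPu.xbeam_dir_self,
      neg_add_eq_sub, dir_sub_dir, huv, dir_smul_left]
  rw [hF.dir_xbeam, hDvF, hQ.dir_xbeam, hDuQ, xbeam_smul, hgm.xbeam_dir_self, smul_neg, neg_smul]

lemma linearIndependent_neg_e1 {w : ℝ × ℝ} (hw : w.2 ≠ 0) :
    LinearIndependent ℝ ![((-1 : ℝ), (0 : ℝ)), w] := by
  refine LinearIndependent.pair_iff.2 fun s t hst => ?_
  have h1 := congrArg Prod.fst hst
  have h2 := congrArg Prod.snd hst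
  simp only [Prod.fst_add, Prod.snd_add, Prod.smul_fst, Prod.smul_snd, smul_eq_mul,
    Prod.fst_zero, Prod.snd_zero] at h1 h2
  have ht : t = 0 := by simpa [hw] using h2
  subst ht
  constructor <;> linarith

lemma vlineL_sub_vlineT_of_eq {a : ℝ} (ha : a ≠ 0) {f11 f12 f22 : ℝ × ℝ → ℝ}
    (hc11 : Continuous f11) (hc12 : Continuous f12) (hc22 : Continuous f22)
    (s11 : SuppInDisc f11) (s12 : SuppInDisc f12) (s22 : SuppInDisc f22) :
    VlineL a a f11 f12 f22 - VlineT a a f11 f12 f22 =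
      (4 * a ^ 2) • (Xbeam (a, a) f12 - Xbeam (-a, a) f12) := by
  have hrhs : (4 * a ^ 2) • (Xbeam (a, a) f12 - Xbeam (-a, a) f12) =
      Xbeam (a, a) ((4 * a ^ 2) • f12) + Xbeam (-a, a) ((-(4 * a ^ 2)) • f12) := by
    rw [xbeam_smul, xbeam_smul, neg_smul, smul_sub, sub_eq_add_neg]
  rw [hrhs, VlineL, VlineT, add_sub_add_comm, xbeam_sub_xbeam, xbeam_sub_xbeam]
  · congr 2 <;> funext y <;> simp only [Pi.sub_apply, Pi.smul_apply, smul_eq_mul] <;> ring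
  all_goals first
    | fun_prop
    | simpa using ha
    | exact SuppInDisc.hasCompactSupport fun z hz => by simp [s11 z hz, s12 z hz, s22 z hz]

lemma vlineM_of_eq (a : ℝ) (f11 f12 f22 : ℝ × ℝ → ℝ) :
    VlineM a a f11 f12 f22 = a ^ 2 • (Xbeam (a, a) (f22 - f11) - Xbeam (-a, a) (f22 - f11)) := by
  have hrhs : a ^ 2 • (Xbeam (a, a) (f22 - f11) - Xbeam (-a, a) (f22 - f11)) =
      Xbeam (a, a) (a ^ 2 • (f22 - f11)) + Xbeam (-a, a) ((-a ^ 2) • (f22 - f11)) := by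
    rw [xbeam_smul, xbeam_smul, neg_smul, smul_sub, sub_eq_add_neg]
  rw [hrhs, VlineM]
  congr 2 <;> funext y <;> simp only [Pi.sub_apply, Pi.smul_apply, smul_eq_mul] <;> ring

theorem special_case_u1_eq_u2_general
    (u1 u2 : ℝ) (hu : u1 ^ 2 + u2 ^ 2 = 1)
    (heq : u1 = u2)
    (f11 f12 f22 : ℝ × ℝ → ℝ)
    (h11 : ContDiff ℝ 2 f11) (h12 : ContDiff ℝ 2 f12) (h22 : ContDiff ℝ 2 f22)
    (s11 : SuppInDisc f11) (s12 : SuppInDisc f12) (s22 : SuppInDisc f22)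
    (x : ℝ × ℝ) :
    f12 x =
      (1 / (4 * u1)) *
        Dir (u1, u2) (Dir (-u1, u2)
          (Xbeam ((-1 : ℝ), (0 : ℝ))
            (VlineL u1 u2 f11 f12 f22 - VlineT u1 u2 f11 f12 f22))) x ∧
    f22 x - f11 x =
      (1 / u1) *
        Dir (u1, u2) (Dir (-u1, u2)
          (Xbeam ((-1 : ℝ), (0 : ℝ)) (VlineM u1 u2 f11 f12 f22))) x := by
  subst u2
  have ha : u1 ≠ 0 := by
    rintro rfl
    norm_num at hu
  have hrecover {g : ℝ × ℝ → ℝ} (hg : ContDiff ℝ 2 g) (hgc : HasCompactSupport g) :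
      Dir (u1, u1) (Dir (-u1, u1) (Xbeam (-1, 0) (Xbeam (u1, u1) g - Xbeam (-u1, u1) g))) =
        (2 * u1) • g := by
    rw [dir_dir_xbeam_xbeam_sub (c := -(2 * u1)) (by ext <;> simp; ring)
      (linearIndependent_neg_e1 ha) (linearIndependent_neg_e1 ha) hg hgc,
      neg_neg]
  rw [vlineL_sub_vlineT_of_eq ha h11.continuous h12.continuous h22.continuous s11 s12 s22,
    vlineM_of_eq, xbeam_smul, xbeam_smul, dir_smul, dir_smul, dir_smul, dir_smul,
    hrecover h12 s12.hasCompactSupport,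
    hrecover (g := f22 - f11) (h22.sub h11) (s22.hasCompactSupport.sub s11.hasCompactSupport)]
  simp only [Pi.smul_apply, Pi.sub_apply, smul_eq_mul]
  constructor
  · field_simp
    linear_combination (-f12 x) * hu
  · field_simp
    linear_combination (f11 x - f22 x) * hu

/-- when `u1 = u2 (= 1/√2)`, the off-diagonal component `f12` and the
difference `f22 - f11` are recovered from `Lf - Tf` and `Mf` respectively. -/
theorem special_case_u1_eq_u2
    (u1 u2 : ℝ) (hu : u1 ^ 2 + u2 ^ 2 = 1) (hu1 : 0 < u1) (hu2 : 0 < u2)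
    (heq : u1 = u2)
    (f11 f12 f22 : ℝ × ℝ → ℝ)
    (h11 : ContDiff ℝ 2 f11) (h12 : ContDiff ℝ 2 f12) (h22 : ContDiff ℝ 2 f22)
    (s11 : SuppInDisc f11) (s12 : SuppInDisc f12) (s22 : SuppInDisc f22)
    (x : ℝ × ℝ) :
    f12 x =
      (1 / (4 * u1)) *
        Dir (u1, u2) (Dir (-u1, u2)
          (Xbeam ((-1 : ℝ), (0 : ℝ))
            (VlineL u1 u2 f11 f12 f22 - VlineT u1 u2 f11 f12 f22))) x ∧
    f22 x - f11 x =
      (1 / u1) *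
        Dir (u1, u2) (Dir (-u1, u2)
          (Xbeam ((-1 : ℝ), (0 : ℝ)) (VlineM u1 u2 f11 f12 f22))) x :=
  special_case_u1_eq_u2_general u1 u2 hu heq f11 f12 f22 h11 h12 h22 s11 s12 s22 x
end
end

section
/- Let g = (g1, g2) be a vector field on ℝ² whose components are twice continuously differentiable and compactly supported, and let f = d g be the symmetric 2-tensor field with components f11 = ∂g1/∂x1, f12 = (1/2)(∂g1/∂x2 + ∂g2/∂x1), f22 = ∂g2/∂x2. Then for every x ∈ ℝ²: Lf(x) = −2 u2 g2(x), and Mf(x) = 2 u2 g1(x) − (1/2)[X_u(∂g2/∂x1 − ∂g1/∂x2)(x) + X_v(∂g2/∂x1 − ∂g1/∂x2)(x)]. -/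
/-! For a direction `w` put `⟨g, w⟩ = w₁ g₁ + w₂ g₂`. Since `f = d g` is the symmetrised
gradient, `⟨f w, w⟩ = D_w ⟨g, w⟩`, and for `|w| = 1` also
`⟨f w, w^⊥⟩ = D_w ⟨g, w^⊥⟩ - ½ curl g` with `w^⊥ = (-w₂, w₁)`. By the fundamental theorem of
calculus along the ray, `X_w (D_w φ) = -φ` for compactly supported `C¹` functions `φ`.
Applied to `u` and `v` this gives `Lf = -⟨g, u + v⟩` and
`Mf = -⟨g, u^⊥ + v^⊥⟩ - ½ (X_u + X_v) curl g`, where `u + v = (0, 2u₂)` and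
`u^⊥ + v^⊥ = (-2u₂, 0)`. -/

noncomputable section

open MeasureTheory

open Filter Topology Set

section Ray

variable {E F : Type*} [NormedAddCommGroup E] [NormedSpace ℝ E]
  [NormedAddCommGroup F] {h : E → F} {w : E}

theorem HasCompactSupport.comp_ray (hc : HasCompactSupport h) (hw : w ≠ 0) (x : E) :
    HasCompactSupport fun t : ℝ => h (x + t • w) :=
  (hc.comp_isClosedEmbedding (Homeomorph.addLeft x).isClosedEmbedding).comp_isClosedEmbedding
    (isClosedEmbedding_smul_left hw)

theorem integrableOn_Ioi_comp_ray (hh : Continuous h) (hc : HasCompactSupport h) (hw : w ≠ 0)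
    (x : E) : IntegrableOn (fun t : ℝ => h (x + t • w)) (Ioi 0) :=
  ((hh.comp (by fun_prop)).integrable_of_hasCompactSupport (hc.comp_ray hw x)).integrableOn

theorem integrableOn_Ioi_fderiv_ray [NormedSpace ℝ F] (hh : ContDiff ℝ 1 h)
    (hc : HasCompactSupport h) (hw : w ≠ 0) (x : E) :
    IntegrableOn (fun t : ℝ => fderiv ℝ h (x + t • w) w) (Ioi 0) :=
  integrableOn_Ioi_comp_ray (h := (fderiv ℝ h · w))
    ((hh.continuous_fderiv_apply one_ne_zero).comp (continuous_id.prodMk continuous_const))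
    (hc.fderiv_apply (𝕜 := ℝ) w) hw x

theorem integral_Ioi_fderiv_ray [NormedSpace ℝ F] [CompleteSpace F] (hh : ContDiff ℝ 1 h)
    (hc : HasCompactSupport h) (hw : w ≠ 0) (x : E) :
    ∫ t in Ioi (0 : ℝ), fderiv ℝ h (x + t • w) w = -h x := by
  have hderiv : ∀ t ∈ Ici (0 : ℝ),
      HasDerivAt (fun t : ℝ => h (x + t • w)) (fderiv ℝ h (x + t • w) w) t := fun t _ => by
    simpa [Function.comp_def] using
      (hh.differentiable one_ne_zero _).hasFDerivAt.comp_hasDerivAt t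
        (((hasDerivAt_id t).smul_const w).const_add x)
  have hlim : Tendsto (fun t : ℝ => h (x + t • w)) atTop (𝓝 0) :=
    (hc.comp_ray hw x).is_zero_at_infty.mono_left atTop_le_cocompact
  simpa using
    integral_Ioi_of_hasDerivAt_of_tendsto' hderiv (integrableOn_Ioi_fderiv_ray hh hc hw x) hlim

end Ray

def fieldComponent (w : ℝ × ℝ) (g1 g2 : ℝ × ℝ → ℝ) (y : ℝ × ℝ) : ℝ :=
  w.1 * g1 y + w.2 * g2 y

def scalarCurl (g1 g2 : ℝ × ℝ → ℝ) (y : ℝ × ℝ) : ℝ :=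
  fderiv ℝ g2 y (1, 0) - fderiv ℝ g1 y (0, 1)

section VectorField

variable {g1 g2 : ℝ × ℝ → ℝ}

theorem ContDiff.fieldComponent {n : WithTop ℕ∞} (h1 : ContDiff ℝ n g1) (h2 : ContDiff ℝ n g2)
    (w : ℝ × ℝ) : ContDiff ℝ n (fieldComponent w g1 g2) :=
  (contDiff_const.mul h1).add (contDiff_const.mul h2)

theorem HasCompactSupport.fieldComponent (h1 : HasCompactSupport g1) (h2 : HasCompactSupport g2)
    (w : ℝ × ℝ) : HasCompactSupport (fieldComponent w g1 g2) :=
  h1.mul_left.add h2.mul_left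

theorem ContinuousLinearMap.map_prodMk (L : ℝ × ℝ →L[ℝ] ℝ) (a b : ℝ) :
    L (a, b) = a * L (1, 0) + b * L (0, 1) := by
  rw [← smul_eq_mul, ← smul_eq_mul, ← L.map_smul, ← L.map_smul, ← map_add]
  simp

theorem fderiv_fieldComponent_apply {y : ℝ × ℝ} (h1 : DifferentiableAt ℝ g1 y)
    (h2 : DifferentiableAt ℝ g2 y) (w : ℝ × ℝ) (a b : ℝ) :
    fderiv ℝ (fieldComponent w g1 g2) y (a, b) =
      w.1 * (a * fderiv ℝ g1 y (1, 0) + b * fderiv ℝ g1 y (0, 1)) +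
        w.2 * (a * fderiv ℝ g2 y (1, 0) + b * fderiv ℝ g2 y (0, 1)) := by
  unfold fieldComponent
  rw [fderiv_fun_add (h1.const_mul _) (h2.const_mul _), fderiv_const_mul h1,
    fderiv_const_mul h2]
  simp only [add_apply, smul_apply, smul_eq_mul]
  rw [ContinuousLinearMap.map_prodMk (fderiv ℝ g1 y),
    ContinuousLinearMap.map_prodMk (fderiv ℝ g2 y)]

theorem ContDiff.continuous_scalarCurl (h1 : ContDiff ℝ 1 g1) (h2 : ContDiff ℝ 1 g2) :
    Continuous (scalarCurl g1 g2) :=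
  ((h2.continuous_fderiv_apply one_ne_zero).comp (continuous_id.prodMk continuous_const)).sub
    ((h1.continuous_fderiv_apply one_ne_zero).comp (continuous_id.prodMk continuous_const))

theorem HasCompactSupport.scalarCurl (h1 : HasCompactSupport g1) (h2 : HasCompactSupport g2) :
    HasCompactSupport (scalarCurl g1 g2) :=
  (h2.fderiv_apply (𝕜 := ℝ) _).sub (h1.fderiv_apply (𝕜 := ℝ) _)

end VectorField

section Beam

variable {h φ ψ : ℝ × ℝ → ℝ} {w : ℝ × ℝ}

theorem Xbeam_eq_neg_of_eq_fderiv (hφ : ContDiff ℝ 1 φ) (hφc : HasCompactSupport φ) (hw : w ≠ 0)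
    (hh : ∀ y, h y = fderiv ℝ φ y w) (x : ℝ × ℝ) : Xbeam w h x = -φ x := by
  simp only [Xbeam, hh]
  exact integral_Ioi_fderiv_ray hφ hφc hw x

theorem Xbeam_eq_of_eq_fderiv_sub_mul (c : ℝ) (hφ : ContDiff ℝ 1 φ) (hφc : HasCompactSupport φ)
    (hψ : Continuous ψ) (hψc : HasCompactSupport ψ) (hw : w ≠ 0)
    (hh : ∀ y, h y = fderiv ℝ φ y w - c * ψ y) (x : ℝ × ℝ) :
    Xbeam w h x = -φ x - c * Xbeam w ψ x := by
  simp only [Xbeam, hh]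
  rw [integral_sub (integrableOn_Ioi_fderiv_ray hφ hφc hw x)
      ((integrableOn_Ioi_comp_ray hψ hψc hw x).const_mul c),
    integral_Ioi_fderiv_ray hφ hφc hw x, integral_const_mul]

end Beam

theorem potential_field_L_and_M_general
    (u1 u2 : ℝ) (hu : u1 ^ 2 + u2 ^ 2 = 1)
    (g1 g2 : ℝ × ℝ → ℝ)
    (hg1 : ContDiff ℝ 2 g1) (hg2 : ContDiff ℝ 2 g2)
    (hc1 : HasCompactSupport g1) (hc2 : HasCompactSupport g2)
    (f11 f12 f22 : ℝ × ℝ → ℝ)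
    (hf11 : ∀ y : ℝ × ℝ, f11 y = fderiv ℝ g1 y ((1 : ℝ), (0 : ℝ)))
    (hf12 : ∀ y : ℝ × ℝ, f12 y =
      (1 / 2) * (fderiv ℝ g1 y ((0 : ℝ), (1 : ℝ)) + fderiv ℝ g2 y ((1 : ℝ), (0 : ℝ))))
    (hf22 : ∀ y : ℝ × ℝ, f22 y = fderiv ℝ g2 y ((0 : ℝ), (1 : ℝ)))
    (x : ℝ × ℝ) :
    VlineL u1 u2 f11 f12 f22 x = -(2 * u2) * g2 x ∧
    VlineM u1 u2 f11 f12 f22 x =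
      2 * u2 * g1 x -
        (1 / 2) *
          (Xbeam (u1, u2)
              (fun y => fderiv ℝ g2 y ((1 : ℝ), (0 : ℝ)) - fderiv ℝ g1 y ((0 : ℝ), (1 : ℝ))) x +
            Xbeam (-u1, u2)
              (fun y => fderiv ℝ g2 y ((1 : ℝ), (0 : ℝ)) - fderiv ℝ g1 y ((0 : ℝ), (1 : ℝ))) x) := by
  have hg1' : ContDiff ℝ 1 g1 := hg1.of_le one_le_two
  have hg2' : ContDiff ℝ 1 g2 := hg2.of_le one_le_two
  have hφ (w : ℝ × ℝ) := hg1'.fieldComponent hg2' w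
  have hφc (w : ℝ × ℝ) := hc1.fieldComponent hc2 w
  have hdφ (w : ℝ × ℝ) (y : ℝ × ℝ) := fderiv_fieldComponent_apply
    (hg1'.differentiable one_ne_zero y) (hg2'.differentiable one_ne_zero y) w
  have hcurl := hg1'.continuous_scalarCurl hg2'
  have hcurlc := hc1.scalarCurl hc2
  have hu0 : ((u1, u2) : ℝ × ℝ) ≠ 0 := fun h => by simp_all [Prod.ext_iff]
  have hv0 : ((-u1, u2) : ℝ × ℝ) ≠ 0 := fun h => by simp_all [Prod.ext_iff]
  constructor
  · rw [VlineL, Pi.add_apply,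
      Xbeam_eq_neg_of_eq_fderiv (hφ (u1, u2)) (hφc _) hu0 (fun y => ?_) x,
      Xbeam_eq_neg_of_eq_fderiv (hφ (-u1, u2)) (hφc _) hv0 (fun y => ?_) x]
    · unfold fieldComponent; ring
    all_goals rw [hf11, hf12, hf22, hdφ]; ring
  · rw [VlineM, Pi.add_apply,
      Xbeam_eq_of_eq_fderiv_sub_mul (1 / 2) (hφ (-u2, u1)) (hφc _) hcurl hcurlc hu0
        (fun y => ?_) x,
      Xbeam_eq_of_eq_fderiv_sub_mul (1 / 2) (hφ (-u2, -u1)) (hφc _) hcurl hcurlc hv0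
        (fun y => ?_) x]
    · unfold fieldComponent scalarCurl; ring
    all_goals
      rw [hf11, hf12, hf22, hdφ, scalarCurl]
      linear_combination (fderiv ℝ g1 y (0, 1) - fderiv ℝ g2 y (1, 0)) / 2 * hu

/-- the longitudinal and mixed V-line transforms of a potential
tensor field `f = d g`. -/
theorem potential_field_L_and_M
    (u1 u2 : ℝ) (hu : u1 ^ 2 + u2 ^ 2 = 1) (hu1 : 0 < u1) (hu2 : 0 < u2)
    (g1 g2 : ℝ × ℝ → ℝ)
    (hg1 : ContDiff ℝ 2 g1) (hg2 : ContDiff ℝ 2 g2)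
    (hc1 : HasCompactSupport g1) (hc2 : HasCompactSupport g2)
    (f11 f12 f22 : ℝ × ℝ → ℝ)
    (hf11 : ∀ y : ℝ × ℝ, f11 y = fderiv ℝ g1 y ((1 : ℝ), (0 : ℝ)))
    (hf12 : ∀ y : ℝ × ℝ, f12 y =
      (1 / 2) * (fderiv ℝ g1 y ((0 : ℝ), (1 : ℝ)) + fderiv ℝ g2 y ((1 : ℝ), (0 : ℝ))))
    (hf22 : ∀ y : ℝ × ℝ, f22 y = fderiv ℝ g2 y ((0 : ℝ), (1 : ℝ)))
    (x : ℝ × ℝ) :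
    VlineL u1 u2 f11 f12 f22 x = -(2 * u2) * g2 x ∧
    VlineM u1 u2 f11 f12 f22 x =
      2 * u2 * g1 x -
        (1 / 2) *
          (Xbeam (u1, u2)
              (fun y => fderiv ℝ g2 y ((1 : ℝ), (0 : ℝ)) - fderiv ℝ g1 y ((0 : ℝ), (1 : ℝ))) x +
            Xbeam (-u1, u2)
              (fun y => fderiv ℝ g2 y ((1 : ℝ), (0 : ℝ)) - fderiv ℝ g1 y ((0 : ℝ), (1 : ℝ))) x) :=
  potential_field_L_and_M_general u1 u2 hu g1 g2 hg1 hg2 hc1 hc2 f11 f12 f22 hf11 hf12 hf22 x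
end
end
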